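/- arXiv:math/0306093 — 4 statements merged into one kernel-verified Lean document; each statement's English description precedes it below -/
import Mathlib

section
/- If a nonnegative function φ on the unit disc admits a quasi-bounded positive harmonic majorant (i.e. the Poisson integral of a nonnegative L¹ function), then its non-tangential maximal function Mφ satisfies lim_{t→∞} t·σ{ ζ : Mφ(ζ) > t } = 0. -/
open MeasureTheory Set
open scoped Real ENNReal

noncomputable section

def unitDisc : Set ℂ := Metric.ball 0 1
def unitCircle : Set ℂ := Metric.sphere 0 1

/-- The Poisson kernel of the unit disc. -/
def poissonK (z ζ : ℂ) : ℝ := (1 - ‖z‖ ^ 2) / ‖ζ - z‖ ^ 2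

/-- The Laplacian of a function `h : ℂ → ℝ`, viewing `ℂ` as `ℝ²`. -/
def lap (h : ℂ → ℝ) (z : ℂ) : ℝ :=
  iteratedFDeriv ℝ 2 h z ![1, 1] + iteratedFDeriv ℝ 2 h z ![Complex.I, Complex.I]

/-- `h` is harmonic on the open unit disc. -/
def HarmonicOnDisc (h : ℂ → ℝ) : Prop :=
  ContDiffOn ℝ 2 h unitDisc ∧ ∀ z ∈ unitDisc, lap h z = 0

/-- The Stolz angle of aperture `α` with vertex `exp(iθ)`. -/
def stolz (α : ℝ) (θ : ℝ) : Set ℂ :=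
  {z ∈ unitDisc | ‖z - Complex.exp (θ * Complex.I)‖ ≤ α * (1 - ‖z‖ ^ 2)}

/-- Non-tangential maximal function of `φ` (with values in `[0,∞]`). -/
def maxNT (α : ℝ) (φ : ℂ → ℝ) (θ : ℝ) : ℝ≥0∞ :=
  ⨆ z ∈ stolz α θ, ENNReal.ofReal (φ z)

/-!
In a Stolz angle with vertex `e^{iθ}` the Poisson kernel `P_z(e^{is})` is at most a constant times
the approximate identity `ρ / (ρ² + (s - θ)²)`, `ρ = 1 - |z|²`; averaging this kernel against the
periodic extension `W` of `w` over dyadic intervals around `θ` gives `Mφ ≤ C · M W`, with `M` the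
Hardy–Littlewood maximal function. Now split `W ≤ K + (W - K)₊`: the bounded part raises `M W` by at
most `K`, and the Vitali covering lemma gives the weak (1,1) bound
`t · σ{M (W - K)₊ > t} ≲ ‖(w - K)₊‖₁`, which tends to `0` as `K → ∞`.
-/

open Function Metric Filter Topology

theorem MeasureTheory.ofReal_integral_le_lintegral_ofReal {X : Type*} [MeasurableSpace X]
    {μ : Measure X} (f : X → ℝ) :
    ENNReal.ofReal (∫ x, f x ∂μ) ≤ ∫⁻ x, ENNReal.ofReal (f x) ∂μ := by
  by_cases hf : Integrable f μ
  · rw [integral_eq_lintegral_pos_part_sub_lintegral_neg_part hf]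
    calc _ ≤ ENNReal.ofReal (∫⁻ x, ENNReal.ofReal (f x) ∂μ).toReal :=
          ENNReal.ofReal_le_ofReal (sub_le_self _ ENNReal.toReal_nonneg)
      _ ≤ _ := ENNReal.ofReal_toReal_le
  · simp [integral_undef hf]

theorem MeasureTheory.Integrable.tendsto_lintegral_ofReal_tsub_natCast {X : Type*}
    [MeasurableSpace X] {μ : Measure X} {w : X → ℝ} (hw : Integrable w μ) :
    Tendsto (fun n : ℕ => ∫⁻ x, (ENNReal.ofReal (w x) - n) ∂μ) atTop (𝓝 0) := by
  have hlim : ∀ x, Tendsto (fun n : ℕ => ENNReal.ofReal (w x) - n) atTop (𝓝 0) := fun x =>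
    tendsto_const_nhds.congr' <| (eventually_ge_atTop ⌈w x⌉₊).mono fun n hn =>
      (tsub_eq_zero_of_le (by simpa using ENNReal.ofReal_le_ofReal ((Nat.le_ceil _).trans
        (Nat.cast_le.mpr hn)))).symm
  simpa using tendsto_lintegral_of_dominated_convergence' (fun x => ENNReal.ofReal (w x))
    (fun n => hw.aemeasurable.ennreal_ofReal.sub aemeasurable_const)
    (fun n => ae_of_all _ fun x => tsub_le_self) hw.lintegral_lt_top.ne (ae_of_all _ hlim)

theorem Function.Periodic.setLIntegral_Ico_eq {T : ℝ} (hT : 0 < T) {f : ℝ → ℝ≥0∞}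
    (hf : Periodic f T) (a b : ℝ) :
    ∫⁻ x in Ico a (a + T), f x = ∫⁻ x in Ico b (b + T), f x := by
  simp only [setLIntegral_congr Ico_ae_eq_Ioc]
  exact (isAddFundamentalDomain_Ioc hT a).setLIntegral_eq (isAddFundamentalDomain_Ioc hT b) f
    hf.map_vadd_zmultiples

theorem Function.Periodic.setLIntegral_iUnion_closedBall_le {T : ℝ} (hT : 0 < T)
    {f : ℝ → ℝ≥0∞} (hf : Periodic f T) :
    ∫⁻ x in ⋃ θ ∈ Ico 0 T, closedBall θ (T / 2), f x ≤ 2 * ∫⁻ x in Ico 0 T, f x := by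
  have hsub : ⋃ θ ∈ Ico 0 T, closedBall θ (T / 2)
      ⊆ Ico (-(T / 2)) (T / 2) ∪ Ico (T / 2) (T / 2 + T) := by
    rw [Ico_union_Ico_eq_Ico (by linarith) (by linarith)]
    refine iUnion₂_subset fun θ hθ => ?_
    rw [Real.closedBall_eq_Icc]
    exact Icc_subset_Ico (by linarith [hθ.1]) (by linarith [hθ.2])
  have hleft := hf.setLIntegral_Ico_eq hT (-(T / 2)) 0
  rw [show -(T / 2) + T = T / 2 by ring, zero_add] at hleft
  calc ∫⁻ x in ⋃ θ ∈ Ico 0 T, closedBall θ (T / 2), f x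
      ≤ ∫⁻ x in Ico (-(T / 2)) (T / 2) ∪ Ico (T / 2) (T / 2 + T), f x := lintegral_mono_set hsub
    _ ≤ (∫⁻ x in Ico (-(T / 2)) (T / 2), f x) + ∫⁻ x in Ico (T / 2) (T / 2 + T), f x :=
        lintegral_union_le _ _ _
    _ = 2 * ∫⁻ x in Ico 0 T, f x := by
        rw [hleft, hf.setLIntegral_Ico_eq hT _ 0, zero_add, two_mul]

/-- The centred Hardy–Littlewood maximal function on `ℝ`, with radii at most `R`. -/
def hlMaximal (R : ℝ) (V : ℝ → ℝ≥0∞) (θ : ℝ) : ℝ≥0∞ :=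
  ⨆ r ∈ Ioc 0 R, (∫⁻ s in closedBall θ r, V s) / ENNReal.ofReal (2 * r)

theorem setLIntegral_closedBall_le_hlMaximal {R r : ℝ} (V : ℝ → ℝ≥0∞) (θ : ℝ)
    (hr : r ∈ Ioc 0 R) :
    ∫⁻ s in closedBall θ r, V s ≤ ENNReal.ofReal (2 * r) * hlMaximal R V θ := by
  rw [mul_comm, ← ENNReal.div_le_iff (by simpa using hr.1) ENNReal.ofReal_ne_top]
  exact le_iSup₂ (f := fun r _ => (∫⁻ s in closedBall θ r, V s) / ENNReal.ofReal (2 * r)) r hr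

theorem hlMaximal_le_add_hlMaximal_tsub (R : ℝ) (V : ℝ → ℝ≥0∞) (c : ℝ≥0∞) (θ : ℝ) :
    hlMaximal R V θ ≤ c + hlMaximal R (fun s => V s - c) θ := by
  refine iSup₂_le fun r hr => ?_
  have h2r : ENNReal.ofReal (2 * r) ≠ 0 := by simpa using hr.1
  calc (∫⁻ s in closedBall θ r, V s) / ENNReal.ofReal (2 * r)
      ≤ (∫⁻ s in closedBall θ r, (c + (V s - c))) / ENNReal.ofReal (2 * r) := by
        gcongr with s; exact le_add_tsub
    _ = c + (∫⁻ s in closedBall θ r, (V s - c)) / ENNReal.ofReal (2 * r) := by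
        rw [lintegral_add_left measurable_const, setLIntegral_const, Real.volume_closedBall,
          ENNReal.add_div, ENNReal.mul_div_cancel_right h2r ENNReal.ofReal_ne_top]
    _ ≤ c + hlMaximal R (fun s => V s - c) θ := by
        gcongr
        exact le_iSup₂ (f := fun r _ => (∫⁻ s in closedBall θ r, (V s - c)) /
          ENNReal.ofReal (2 * r)) r hr

theorem exists_abs_le_two_pow_mul_and_div_le {ρ : ℝ} (hρ : 0 < ρ) (u : ℝ) :
    ∃ j : ℕ, |u| ≤ 2 ^ j * ρ ∧ ρ / (ρ ^ 2 + u ^ 2) ≤ 4 / (4 ^ j * ρ) := by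
  have hex : ∃ j : ℕ, |u| ≤ 2 ^ j * ρ := by
    obtain ⟨j, hj⟩ := pow_unbounded_of_one_lt (|u| / ρ) one_lt_two
    exact ⟨j, ((div_lt_iff₀ hρ).mp hj).le⟩
  refine ⟨Nat.find hex, Nat.find_spec hex, ?_⟩
  have key : 4 ^ Nat.find hex * ρ ^ 2 ≤ 4 * (ρ ^ 2 + u ^ 2) := by
    rcases h : Nat.find hex with _ | i
    · nlinarith
    · have hi : 2 ^ i * ρ < |u| := not_le.mp (Nat.find_min hex (by omega))
      have : (2 ^ i * ρ) ^ 2 ≤ u ^ 2 := by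
        rw [← sq_abs u]; exact pow_le_pow_left₀ (by positivity) hi.le 2
      rw [pow_succ, show (4 : ℝ) ^ i = (2 ^ i) ^ 2 by rw [← pow_mul, mul_comm, pow_mul]; norm_num]
      nlinarith
  rw [div_le_div_iff₀ (by positivity) (by positivity)]
  nlinarith

theorem ofReal_four_div_mul_ofReal_two_mul_le {ρ r : ℝ} (hρ : 0 < ρ) (j : ℕ)
    (hr : r ≤ 2 ^ j * ρ) :
    ENNReal.ofReal (4 / (4 ^ j * ρ)) * ENNReal.ofReal (2 * r) ≤ 8 * 2⁻¹ ^ j := by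
  have h8 : 4 / (4 ^ j * ρ) * (2 * (2 ^ j * ρ)) = 8 * 2⁻¹ ^ j := by
    rw [show (4 : ℝ) ^ j = 2 ^ j * 2 ^ j by rw [← mul_pow]; norm_num, inv_pow]
    field_simp
    ring
  have h8' : (8 : ℝ≥0∞) * 2⁻¹ ^ j = ENNReal.ofReal (8 * 2⁻¹ ^ j) := by
    rw [ENNReal.ofReal_mul (by norm_num), ENNReal.ofReal_pow (by norm_num),
      ENNReal.ofReal_inv_of_pos two_pos]
    norm_num
  rw [← ENNReal.ofReal_mul (by positivity), h8', ← h8]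
  gcongr

theorem setLIntegral_closedBall_poisson_le_hlMaximal {ρ R : ℝ} (hρ : 0 < ρ) (hR : 0 < R)
    (V : ℝ → ℝ≥0∞) (θ : ℝ) :
    ∫⁻ s in closedBall θ R, ENNReal.ofReal (ρ / (ρ ^ 2 + (s - θ) ^ 2)) * V s
      ≤ 16 * hlMaximal R V θ := by
  set k : ℝ → ℝ := fun s => ρ / (ρ ^ 2 + (s - θ) ^ 2)
  set A : ℕ → Set ℝ := fun j =>
    closedBall θ (min (2 ^ j * ρ) R) ∩ {s | k s ≤ 4 / (4 ^ j * ρ)}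
  have hA : ∀ j, MeasurableSet (A j) := fun j =>
    measurableSet_closedBall.inter (measurableSet_le (by fun_prop) measurable_const)
  have hcover : closedBall θ R ⊆ ⋃ j, A j := by
    intro s hs
    obtain ⟨j, hjs, hjk⟩ := exists_abs_le_two_pow_mul_and_div_le hρ (s - θ)
    rw [mem_closedBall, Real.dist_eq] at hs
    exact mem_iUnion.mpr ⟨j, by simpa [A, Real.dist_eq] using ⟨⟨hjs, hs⟩, hjk⟩⟩
  have hterm : ∀ j : ℕ, ∫⁻ s in A j, ENNReal.ofReal (k s) * V s
      ≤ 8 * 2⁻¹ ^ j * hlMaximal R V θ := by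
    intro j
    have hr : min (2 ^ j * ρ) R ∈ Ioc 0 R := ⟨lt_min (by positivity) hR, min_le_right _ _⟩
    calc ∫⁻ s in A j, ENNReal.ofReal (k s) * V s
        ≤ ∫⁻ s in A j, ENNReal.ofReal (4 / (4 ^ j * ρ)) * V s :=
          setLIntegral_mono' (hA j) fun s hs => by gcongr; exact hs.2
      _ = ENNReal.ofReal (4 / (4 ^ j * ρ)) * ∫⁻ s in A j, V s :=
          lintegral_const_mul' _ _ ENNReal.ofReal_ne_top
      _ ≤ ENNReal.ofReal (4 / (4 ^ j * ρ)) *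
            (ENNReal.ofReal (2 * min (2 ^ j * ρ) R) * hlMaximal R V θ) := by
          gcongr
          exact (lintegral_mono_set inter_subset_left).trans
            (setLIntegral_closedBall_le_hlMaximal V θ hr)
      _ ≤ 8 * 2⁻¹ ^ j * hlMaximal R V θ := by
          rw [← mul_assoc]
          exact mul_le_mul_left (ofReal_four_div_mul_ofReal_two_mul_le hρ j (min_le_left _ _)) _
  calc ∫⁻ s in closedBall θ R, ENNReal.ofReal (k s) * V s
      ≤ ∫⁻ s in ⋃ j, A j, ENNReal.ofReal (k s) * V s := lintegral_mono_set hcover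
    _ ≤ ∑' j, ∫⁻ s in A j, ENNReal.ofReal (k s) * V s := lintegral_iUnion_le _ _
    _ ≤ ∑' j : ℕ, 8 * 2⁻¹ ^ j * hlMaximal R V θ := ENNReal.tsum_le_tsum hterm
    _ = 16 * hlMaximal R V θ := by
        rw [ENNReal.tsum_mul_right, ENNReal.tsum_mul_left, ENNReal.tsum_geometric,
          ENNReal.one_sub_inv_two, inv_inv]
        norm_num

theorem volume_lt_hlMaximal_le (R : ℝ) (V : ℝ → ℝ≥0∞) (E : Set ℝ) {t : ℝ} (ht : 0 < t) :
    volume {θ ∈ E | ENNReal.ofReal t < hlMaximal R V θ}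
      ≤ ENNReal.ofReal (4 / t) * ∫⁻ s in ⋃ θ ∈ E, closedBall θ R, V s := by
  set F := {θ ∈ E | ENNReal.ofReal t < hlMaximal R V θ}
  have hradius : ∀ θ ∈ F, ∃ r ∈ Ioc 0 R,
      ENNReal.ofReal t * ENNReal.ofReal (2 * r) ≤ ∫⁻ s in closedBall θ r, V s := by
    intro θ hθ
    obtain ⟨r, hr, htr⟩ := by simpa only [hlMaximal, lt_iSup_iff] using hθ.2
    refine ⟨r, hr, (ENNReal.le_div_iff_mul_le (.inl ?_) (.inl ENNReal.ofReal_ne_top)).mp htr.le⟩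
    simpa using hr.1
  choose! r hr hrV using hradius
  obtain ⟨u, huF, hdisj, hcov⟩ := Vitali.exists_disjoint_subfamily_covering_enlargement_closedBall
    F id r R (fun θ hθ => (hr θ hθ).2) 4 (by norm_num)
  simp only [id] at hdisj hcov
  have hu : u.Countable := hdisj.countable_of_nonempty_interior fun θ hθ => by
    simpa [interior_closedBall _ (hr θ (huF hθ)).1.ne'] using (hr θ (huF hθ)).1
  calc volume F ≤ volume (⋃ b ∈ u, closedBall b (4 * r b)) := by
        refine measure_mono fun θ hθ => ?_
        obtain ⟨b, hb, hθb⟩ := hcov θ hθ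
        exact mem_biUnion hb (hθb (mem_closedBall_self (hr θ hθ).1.le))
    _ ≤ ∑' b : u, volume (closedBall (b : ℝ) (4 * r b)) := measure_biUnion_le _ hu _
    _ = ∑' b : u, ENNReal.ofReal (4 / t) * (ENNReal.ofReal t * ENNReal.ofReal (2 * r b)) := by
        refine tsum_congr fun b => ?_
        rw [Real.volume_closedBall, ← ENNReal.ofReal_mul ht.le,
          ← ENNReal.ofReal_mul (by positivity)]
        congr 1
        field_simp
    _ ≤ ∑' b : u, ENNReal.ofReal (4 / t) * ∫⁻ s in closedBall (b : ℝ) (r b), V s := by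
        gcongr with b; exact hrV b (huF b.2)
    _ = ENNReal.ofReal (4 / t) * ∫⁻ s in ⋃ b ∈ u, closedBall b (r b), V s := by
        rw [ENNReal.tsum_mul_left, lintegral_biUnion hu (fun _ _ => measurableSet_closedBall) hdisj]
    _ ≤ ENNReal.ofReal (4 / t) * ∫⁻ s in ⋃ θ ∈ E, closedBall θ R, V s := by
        refine mul_le_mul_right (lintegral_mono_set ?_) _
        exact iUnion₂_subset fun b hb => (closedBall_subset_closedBall (hr b (huF hb)).2).trans
          (subset_biUnion_of_mem (u := fun θ => closedBall θ R) (huF hb).1)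

theorem Function.Periodic.volume_lt_hlMaximal_le {T : ℝ} (hT : 0 < T) {B : ℝ → ℝ≥0∞}
    (hB : Periodic B T) {t : ℝ} (ht : 0 < t) :
    volume {θ ∈ Ico 0 T | ENNReal.ofReal t < hlMaximal (T / 2) B θ}
      ≤ ENNReal.ofReal (8 / t) * ∫⁻ s in Ico 0 T, B s :=
  calc volume {θ ∈ Ico 0 T | ENNReal.ofReal t < hlMaximal (T / 2) B θ}
      ≤ ENNReal.ofReal (4 / t) * ∫⁻ s in ⋃ θ ∈ Ico 0 T, closedBall θ (T / 2), B s :=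
        _root_.volume_lt_hlMaximal_le _ B _ ht
    _ ≤ ENNReal.ofReal (4 / t) * (ENNReal.ofReal 2 * ∫⁻ s in Ico 0 T, B s) := by
        rw [ENNReal.ofReal_ofNat]; gcongr; exact hB.setLIntegral_iUnion_closedBall_le hT
    _ = ENNReal.ofReal (8 / t) * ∫⁻ s in Ico 0 T, B s := by
        rw [← mul_assoc, ← ENNReal.ofReal_mul (by positivity)]
        congr 2
        ring

theorem Complex.mul_abs_sub_le_norm_exp_sub_exp {s θ : ℝ} (h : |s - θ| ≤ π) :
    2 / π * |s - θ| ≤ ‖Complex.exp (s * Complex.I) - Complex.exp (θ * Complex.I)‖ := by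
  have hfac : Complex.exp (s * Complex.I) - Complex.exp (θ * Complex.I)
      = Complex.exp (θ * Complex.I) * (Complex.exp (Complex.I * ↑(s - θ)) - 1) := by
    rw [mul_sub, mul_one, ← Complex.exp_add]; push_cast; ring_nf
  rw [hfac, norm_mul, Complex.norm_exp_ofReal_mul_I, one_mul, Complex.norm_exp_I_mul_ofReal_sub_one,
    norm_mul, Real.norm_eq_abs, Real.norm_eq_abs, abs_two]
  have := Real.mul_abs_le_abs_sin (x := (s - θ) / 2) (by rw [abs_div, abs_two]; linarith)
  rw [abs_div, abs_two] at this
  linarith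

theorem poissonK_exp_le_of_mem_stolz {α θ s : ℝ} {z : ℂ} (hz : z ∈ stolz α θ)
    (hs : |s - θ| ≤ π) :
    poissonK z (Complex.exp (s * Complex.I)) ≤
      π ^ 2 / 4 * (4 + (1 + 2 * α) ^ 2) *
        ((1 - ‖z‖ ^ 2) / ((1 - ‖z‖ ^ 2) ^ 2 + (s - θ) ^ 2)) := by
  obtain ⟨hzD, hzS⟩ := hz
  have hz1 : ‖z‖ < 1 := mem_ball_zero_iff.mp hzD
  set ρ := 1 - ‖z‖ ^ 2
  set D := ‖Complex.exp (s * Complex.I) - z‖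
  set d := ‖Complex.exp (s * Complex.I) - Complex.exp (θ * Complex.I)‖
  have hρ : 0 < ρ := by nlinarith [norm_nonneg z]
  have hα : 0 ≤ α := nonneg_of_mul_nonneg_left ((norm_nonneg _).trans hzS) hρ
  have hρD : ρ ≤ 2 * D := by
    have : 1 - ‖z‖ ≤ D := by
      simpa [Complex.norm_exp_ofReal_mul_I] using
        norm_sub_norm_le (Complex.exp (s * Complex.I)) z
    nlinarith [norm_nonneg z]
  have hdD : d ≤ (1 + 2 * α) * D := by
    have := norm_sub_le_norm_sub_add_norm_sub (Complex.exp (s * Complex.I)) z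
      (Complex.exp (θ * Complex.I))
    nlinarith
  have hchord := Complex.mul_abs_sub_le_norm_exp_sub_exp hs
  have hπ := Real.pi_gt_three
  have hD : 0 < D := by linarith
  have key : ρ ^ 2 + (s - θ) ^ 2 ≤ π ^ 2 / 4 * (4 + (1 + 2 * α) ^ 2) * D ^ 2 := by
    have hu : (s - θ) ^ 2 ≤ π ^ 2 / 4 * d ^ 2 := by
      have h2 : (2 / π * |s - θ|) ^ 2 ≤ d ^ 2 := pow_le_pow_left₀ (by positivity) hchord 2
      rw [mul_pow, sq_abs, div_pow] at h2
      field_simp at h2 ⊢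
      linarith
    have hρ2 : ρ ^ 2 ≤ π ^ 2 / 4 * (2 * D) ^ 2 := by
      have : 1 ≤ π ^ 2 / 4 := by nlinarith
      nlinarith [pow_le_pow_left₀ hρ.le hρD 2]
    have hd2 : d ^ 2 ≤ ((1 + 2 * α) * D) ^ 2 := pow_le_pow_left₀ (norm_nonneg _) hdD 2
    nlinarith
  rw [poissonK, mul_div_assoc', le_div_iff₀ (by positivity), div_mul_eq_mul_div,
    div_le_iff₀ (by positivity)]
  nlinarith

def periodicExt (w : ℝ → ℝ) (s : ℝ) : ℝ≥0∞ := ENNReal.ofReal (w (toIcoMod Real.two_pi_pos 0 s))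

theorem periodicExt_periodic (w : ℝ → ℝ) : Periodic (periodicExt w) (2 * π) := fun s => by
  simp only [periodicExt, toIcoMod_add_right]

theorem periodicExt_of_mem (w : ℝ → ℝ) {s : ℝ} (hs : s ∈ Ico 0 (2 * π)) :
    periodicExt w s = ENNReal.ofReal (w s) := by
  rw [periodicExt, (toIcoMod_eq_self _).mpr (by rwa [zero_add])]

theorem ofReal_poissonIntegral_le_setLIntegral_closedBall {z : ℂ} (hz : z ∈ unitDisc)
    (w : ℝ → ℝ) (θ : ℝ) :
    ENNReal.ofReal
        ((2 * π)⁻¹ * ∫ s in Ico 0 (2 * π), poissonK z (Complex.exp (s * Complex.I)) * w s)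
      ≤ ENNReal.ofReal (2 * π)⁻¹ * ∫⁻ s in closedBall θ π,
          ENNReal.ofReal (poissonK z (Complex.exp (s * Complex.I))) * periodicExt w s := by
  set P := fun s : ℝ => poissonK z (Complex.exp (s * Complex.I))
  have hP : ∀ s, 0 ≤ P s := fun s =>
    div_nonneg (by nlinarith [norm_nonneg z, mem_ball_zero_iff.mp hz]) (sq_nonneg _)
  have hPW : Periodic (fun s => ENNReal.ofReal (P s) * periodicExt w s) (2 * π) := fun s => by
    simp only [P, periodicExt_periodic w s, Complex.ofReal_add, Complex.ofReal_mul, add_mul,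
      Complex.exp_add, Complex.ofReal_ofNat, Complex.exp_two_pi_mul_I, mul_one]
  rw [ENNReal.ofReal_mul (by positivity)]
  refine mul_le_mul_right ((ofReal_integral_le_lintegral_ofReal _).trans ?_) _
  calc ∫⁻ s in Ico 0 (2 * π), ENNReal.ofReal (P s * w s)
      = ∫⁻ s in Ico 0 (0 + 2 * π), ENNReal.ofReal (P s) * periodicExt w s := by
        rw [zero_add]
        refine setLIntegral_congr_fun measurableSet_Ico fun s hs => ?_
        rw [ENNReal.ofReal_mul (hP s), periodicExt_of_mem w hs]
    _ = ∫⁻ s in Ico (θ - π) (θ - π + 2 * π), ENNReal.ofReal (P s) * periodicExt w s :=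
        hPW.setLIntegral_Ico_eq Real.two_pi_pos 0 (θ - π)
    _ ≤ ∫⁻ s in closedBall θ π, ENNReal.ofReal (P s) * periodicExt w s := by
        refine lintegral_mono_set ?_
        rw [Real.closedBall_eq_Icc]
        exact Ico_subset_Icc_self.trans (Icc_subset_Icc le_rfl (by linarith))

theorem maxNT_le_hlMaximal_periodicExt {α : ℝ} {φ : ℂ → ℝ} {w : ℝ → ℝ}
    (hmaj : ∀ z ∈ unitDisc, φ z ≤
      (2 * π)⁻¹ * ∫ θ in Ico 0 (2 * π), poissonK z (Complex.exp (θ * Complex.I)) * w θ)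
    (θ : ℝ) :
    maxNT α φ θ ≤
      ENNReal.ofReal (2 * π * (4 + (1 + 2 * α) ^ 2)) * hlMaximal π (periodicExt w) θ := by
  refine iSup₂_le fun z hz => ?_
  set ρ := 1 - ‖z‖ ^ 2
  have hρ : 0 < ρ := by nlinarith [norm_nonneg z, mem_ball_zero_iff.mp hz.1]
  set c := π ^ 2 / 4 * (4 + (1 + 2 * α) ^ 2)
  set W := periodicExt w
  calc ENNReal.ofReal (φ z)
      ≤ ENNReal.ofReal (2 * π)⁻¹ * ∫⁻ s in closedBall θ π,
          ENNReal.ofReal (poissonK z (Complex.exp (s * Complex.I))) * W s :=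
        (ENNReal.ofReal_le_ofReal (hmaj z hz.1)).trans
          (ofReal_poissonIntegral_le_setLIntegral_closedBall hz.1 w θ)
    _ ≤ ENNReal.ofReal (2 * π)⁻¹ * ∫⁻ s in closedBall θ π,
          ENNReal.ofReal (c * (ρ / (ρ ^ 2 + (s - θ) ^ 2))) * W s := by
        refine mul_le_mul_right (setLIntegral_mono' measurableSet_closedBall fun s hs => ?_) _
        rw [mem_closedBall, Real.dist_eq] at hs
        gcongr
        exact poissonK_exp_le_of_mem_stolz hz hs
    _ = ENNReal.ofReal (2 * π)⁻¹ * (ENNReal.ofReal c *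
          ∫⁻ s in closedBall θ π, ENNReal.ofReal (ρ / (ρ ^ 2 + (s - θ) ^ 2)) * W s) := by
        rw [← lintegral_const_mul' (ENNReal.ofReal c) _ ENNReal.ofReal_ne_top]
        simp_rw [ENNReal.ofReal_mul (by positivity : 0 ≤ c), mul_assoc]
    _ ≤ ENNReal.ofReal (2 * π)⁻¹ * (ENNReal.ofReal c * (16 * hlMaximal π W θ)) := by
        gcongr
        exact setLIntegral_closedBall_poisson_le_hlMaximal hρ Real.pi_pos W θ
    _ = ENNReal.ofReal (2 * π * (4 + (1 + 2 * α) ^ 2)) * hlMaximal π W θ := by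
        rw [← mul_assoc, ← mul_assoc, ← ENNReal.ofReal_ofNat 16,
          ← ENNReal.ofReal_mul (by positivity), ← ENNReal.ofReal_mul (by positivity)]
        congr 2
        field_simp
        ring

theorem mul_volume_lt_le_of_le_hlMaximal {Φ : ℝ → ℝ≥0∞} {w : ℝ → ℝ} {C : ℝ} (hC : 0 < C)
    (hΦ : ∀ θ, Φ θ ≤ ENNReal.ofReal C * hlMaximal π (periodicExt w) θ) (K : ℕ) {t : ℝ}
    (ht : 0 < t) (hKt : 2 * C * K ≤ t) :
    ENNReal.ofReal t * volume {θ ∈ Ico 0 (2 * π) | ENNReal.ofReal t < Φ θ}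
      ≤ ENNReal.ofReal (16 * C) * ∫⁻ s in Ico 0 (2 * π), (ENNReal.ofReal (w s) - K) := by
  set B := fun s => periodicExt w s - K
  have hB : Periodic B (2 * π) := fun s => by simp only [B, periodicExt_periodic w s]
  have ht' : 0 < t / (2 * C) := by positivity
  have hsub : {θ ∈ Ico 0 (2 * π) | ENNReal.ofReal t < Φ θ}
      ⊆ {θ ∈ Ico 0 (2 * π) | ENNReal.ofReal (t / (2 * C)) < hlMaximal π B θ} := by
    rintro θ ⟨hθ, hlt⟩
    refine ⟨hθ, lt_of_not_ge fun hle => hlt.not_ge ?_⟩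
    calc Φ θ ≤ ENNReal.ofReal C * hlMaximal π (periodicExt w) θ := hΦ θ
      _ ≤ ENNReal.ofReal C * (ENNReal.ofReal K + hlMaximal π B θ) := by
          rw [ENNReal.ofReal_natCast]; gcongr; exact hlMaximal_le_add_hlMaximal_tsub _ _ _ θ
      _ ≤ ENNReal.ofReal C * (ENNReal.ofReal K + ENNReal.ofReal (t / (2 * C))) := by gcongr
      _ = ENNReal.ofReal (C * K + t / 2) := by
          rw [← ENNReal.ofReal_add (by positivity) ht'.le, ← ENNReal.ofReal_mul hC.le]
          congr 1
          field_simp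
      _ ≤ ENNReal.ofReal t := ENNReal.ofReal_le_ofReal (by linarith)
  have hweak := hB.volume_lt_hlMaximal_le Real.two_pi_pos ht'
  rw [mul_div_cancel_left₀ π two_ne_zero] at hweak
  calc ENNReal.ofReal t * volume {θ ∈ Ico 0 (2 * π) | ENNReal.ofReal t < Φ θ}
      ≤ ENNReal.ofReal t * (ENNReal.ofReal (8 / (t / (2 * C))) * ∫⁻ s in Ico 0 (2 * π), B s) :=
        mul_le_mul_right ((measure_mono hsub).trans hweak) _
    _ = ENNReal.ofReal (16 * C) * ∫⁻ s in Ico 0 (2 * π), (ENNReal.ofReal (w s) - K) := by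
        rw [← mul_assoc, ← ENNReal.ofReal_mul ht.le]
        congr 1
        · congr 1
          field_simp
          ring
        · exact setLIntegral_congr_fun measurableSet_Ico fun s hs => by
            simp only [B, periodicExt_of_mem w hs]

theorem maxNT_weakL1zero_of_quasibounded_majorant_general (α : ℝ)
    (φ : ℂ → ℝ)
    (w : ℝ → ℝ) (hwint : IntegrableOn w (Ico 0 (2 * π)) volume)
    (hmaj : ∀ z ∈ unitDisc, φ z ≤
      (2 * π)⁻¹ * ∫ θ in Ico 0 (2 * π), poissonK z (Complex.exp (θ * Complex.I)) * w θ) :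
    Filter.Tendsto
      (fun t : ℝ => ENNReal.ofReal t * (ENNReal.ofReal (2 * π)⁻¹ *
        volume {θ ∈ Ico 0 (2 * π) | ENNReal.ofReal t < maxNT α φ θ}))
      Filter.atTop (nhds 0) := by
  set C := 2 * π * (4 + (1 + 2 * α) ^ 2)
  have hC : 0 < C := by positivity
  set c := ENNReal.ofReal (2 * π)⁻¹ * ENNReal.ofReal (16 * C)
  have htail : Tendsto (fun K : ℕ => c * ∫⁻ s in Ico 0 (2 * π), (ENNReal.ofReal (w s) - K))
      atTop (𝓝 0) := by
    simpa using ENNReal.Tendsto.const_mul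
      (Integrable.tendsto_lintegral_ofReal_tsub_natCast hwint) (.inr (by finiteness))
  rw [ENNReal.tendsto_nhds_zero]
  intro ε hε
  obtain ⟨K, hK⟩ := (htail.eventually (ge_mem_nhds hε)).exists
  filter_upwards [eventually_gt_atTop 0, eventually_ge_atTop (2 * C * K)] with t ht hKt
  calc ENNReal.ofReal t * (ENNReal.ofReal (2 * π)⁻¹ *
        volume {θ ∈ Ico 0 (2 * π) | ENNReal.ofReal t < maxNT α φ θ})
      = ENNReal.ofReal (2 * π)⁻¹ * (ENNReal.ofReal t *
        volume {θ ∈ Ico 0 (2 * π) | ENNReal.ofReal t < maxNT α φ θ}) := mul_left_comm _ _ _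
    _ ≤ c * ∫⁻ s in Ico 0 (2 * π), (ENNReal.ofReal (w s) - K) := by
        rw [mul_assoc]
        exact mul_le_mul_right (mul_volume_lt_le_of_le_hlMaximal hC
          (maxNT_le_hlMaximal_periodicExt hmaj) K ht hKt) _
    _ ≤ ε := hK

/-- If a nonnegative function on the disc admits a quasi-bounded positive harmonic majorant
(a Poisson integral of a nonnegative `L¹` function `w`), then `t · σ{Mφ > t} → 0` as `t → ∞`. -/
theorem maxNT_weakL1zero_of_quasibounded_majorant (α : ℝ) (hα : 1 < α)
    (φ : ℂ → ℝ) (hpos : ∀ z ∈ unitDisc, 0 ≤ φ z)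
    (w : ℝ → ℝ) (hw : ∀ θ, 0 ≤ w θ) (hwint : IntegrableOn w (Ico 0 (2 * π)) volume)
    (hmaj : ∀ z ∈ unitDisc, φ z ≤
      (2 * π)⁻¹ * ∫ θ in Ico 0 (2 * π), poissonK z (Complex.exp (θ * Complex.I)) * w θ) :
    Filter.Tendsto
      (fun t : ℝ => ENNReal.ofReal t * (ENNReal.ofReal (2 * π)⁻¹ *
        volume {θ ∈ Ico 0 (2 * π) | ENNReal.ofReal t < maxNT α φ θ}))
      Filter.atTop (nhds 0) :=
  maxNT_weakL1zero_of_quasibounded_majorant_general α φ w hwint hmaj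
end
end

section
/- Suppose μ is a finite positive Borel measure on the unit disc satisfying μ(Q(e^{iθ}, r)) ≤ g(r) for all θ and all r ∈ (0,2), where g is nondecreasing on [0,2) with ∫_0^1 g(x)/x² dx < ∞. Then μ has bounded Poisson balayage: sup_{θ} ∫_D P_z(e^{iθ}) dμ(z) < ∞. -/
open MeasureTheory Set
open scoped Real ENNReal

noncomputable section

/-- Angular distance between `Arg z` and `θ` (computed modulo `2π`). -/
def angDist (z : ℂ) (θ : ℝ) : ℝ := |Complex.arg (z * Complex.exp (-θ * Complex.I))|

/-- The Carleson window `Q(e^{iθ}, r)`. -/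
def carlesonWindow (θ r : ℝ) : Set ℂ :=
  {z ∈ unitDisc | 1 - ‖z‖ ≤ r ∧ angDist z θ ≤ r}

/-!
Layer cake: the balayage at `ζ = e^{iθ}` is at most `5 μ(ℂ) + ∫_5^∞ μ{P_z(ζ) > t} dt`.
Since `P_z(ζ) ≤ 2 / |ζ - z|` and `|ζ - z|` controls both `1 - |z|` and the angle between `z` and
`ζ`, the superlevel set `{P_z(ζ) > t}` lies in the window `Q(ζ, 5/t)`, so the tail is at most
`∫_5^∞ g(5/t) dt = 5 ∫_0^1 g(x)/x² dx`.
-/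

namespace Complex

theorem norm_one_sub_sq_eq (w : ℂ) :
    ‖1 - w‖ ^ 2 = (1 - ‖w‖) ^ 2 + 2 * ‖w‖ * (1 - Real.cos (arg w)) := by
  have hre := norm_mul_cos_arg w
  have hnorm : ‖w‖ ^ 2 = w.re ^ 2 + w.im ^ 2 := by rw [Complex.sq_norm, normSq_apply]; ring
  rw [Complex.sq_norm, normSq_apply]
  simp only [sub_re, one_re, sub_im, one_im]
  linear_combination -hnorm + 2 * hre

theorem four_div_pi_sq_mul_norm_mul_arg_sq_le (w : ℂ) :
    4 / π ^ 2 * ‖w‖ * arg w ^ 2 ≤ ‖1 - w‖ ^ 2 := by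
  have hcos := Real.cos_le_one_sub_mul_cos_sq (abs_arg_le_pi w)
  calc 4 / π ^ 2 * ‖w‖ * arg w ^ 2 = 2 * ‖w‖ * (1 - (1 - 2 / π ^ 2 * arg w ^ 2)) := by ring
    _ ≤ 2 * ‖w‖ * (1 - Real.cos (arg w)) := by gcongr
    _ ≤ ‖1 - w‖ ^ 2 := by rw [norm_one_sub_sq_eq]; exact le_add_of_nonneg_left (sq_nonneg _)

end Complex

open Complex

theorem norm_lt_one_of_poissonK_pos {z ζ : ℂ} (h : 0 < poissonK z ζ) : ‖z‖ < 1 := by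
  by_contra! hz
  exact h.not_ge (div_nonpos_of_nonpos_of_nonneg (by nlinarith) (sq_nonneg _))

theorem poissonK_le_two_div {z ζ : ℂ} (hζ : ‖ζ‖ = 1) : poissonK z ζ ≤ 2 / ‖ζ - z‖ := by
  have hnum : 1 - ‖z‖ ^ 2 ≤ 2 * ‖ζ - z‖ := by
    have := norm_sub_norm_le ζ z
    rw [hζ] at this
    nlinarith [sq_nonneg (1 - ‖z‖)]
  calc poissonK z ζ ≤ 2 * ‖ζ - z‖ / ‖ζ - z‖ ^ 2 := div_le_div_of_nonneg_right hnum (sq_nonneg _)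
    _ = 2 / ‖ζ - z‖ := by
      rcases eq_or_ne ‖ζ - z‖ 0 with h | h
      · simp [h]
      · field_simp

theorem Complex.abs_arg_le_of_mul_norm_one_sub_lt {w : ℂ} {t : ℝ} (ht : 5 ≤ t)
    (hw : t * ‖1 - w‖ < 2) : |arg w| ≤ 5 / t := by
  have hw35 : 3 / 5 ≤ ‖w‖ := by
    have := norm_sub_norm_le (1 : ℂ) w
    rw [norm_one] at this
    nlinarith
  have hπ : π ^ 2 < 10 := by nlinarith [Real.pi_lt_d2, Real.pi_pos]
  have h4 : 4 / π ^ 2 * ‖w‖ * (arg w * t) ^ 2 < 4 :=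
    calc 4 / π ^ 2 * ‖w‖ * (arg w * t) ^ 2 = (4 / π ^ 2 * ‖w‖ * arg w ^ 2) * t ^ 2 := by ring
      _ ≤ ‖1 - w‖ ^ 2 * t ^ 2 :=
        mul_le_mul_of_nonneg_right (four_div_pi_sq_mul_norm_mul_arg_sq_le w) (sq_nonneg t)
      _ = (t * ‖1 - w‖) ^ 2 := by ring
      _ < 2 ^ 2 := pow_lt_pow_left₀ hw (by positivity) two_ne_zero
      _ = 4 := by norm_num
  have hπw : ‖w‖ * (arg w * t) ^ 2 < π ^ 2 := by
    rw [show 4 / π ^ 2 * ‖w‖ * (arg w * t) ^ 2 = 4 * (‖w‖ * (arg w * t) ^ 2) / π ^ 2 by ring,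
      div_lt_iff₀ (by positivity)] at h4
    linarith
  have hsq : (arg w * t) ^ 2 < 5 ^ 2 := by
    nlinarith [mul_le_mul_of_nonneg_right hw35 (sq_nonneg (arg w * t))]
  rw [le_div_iff₀ (by linarith), ← abs_of_pos (by linarith : 0 < t), ← abs_mul]
  exact (abs_lt_of_sq_lt_sq hsq (by norm_num)).le

theorem mem_carlesonWindow_of_lt_poissonK {θ t : ℝ} (ht : 5 ≤ t) {z : ℂ}
    (hz : t < poissonK z (exp (θ * I))) : z ∈ carlesonWindow θ (5 / t) := by
  set w := z * exp (-θ * I)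
  have hunit : ‖exp (-θ * I)‖ = 1 := by
    rw [show -(θ : ℂ) * I = (-θ : ℝ) * I by push_cast; ring, norm_exp_ofReal_mul_I]
  have hdist : ‖exp (θ * I) - z‖ = ‖1 - w‖ := by
    rw [← mul_one ‖_ - z‖, ← hunit, ← norm_mul, sub_mul, ← exp_add,
      show (θ : ℂ) * I + -θ * I = 0 by ring, exp_zero]
  have hclose : t * ‖1 - w‖ < 2 := by
    have h2 := hz.trans_le (poissonK_le_two_div (norm_exp_ofReal_mul_I θ))
    rw [hdist] at h2
    have hpos : 0 < ‖1 - w‖ := by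
      by_contra! h0
      rw [le_antisymm h0 (norm_nonneg _), div_zero] at h2
      linarith
    rw [lt_div_iff₀ hpos] at h2
    linarith
  have hradial : 1 - ‖z‖ ≤ ‖1 - w‖ := by
    have h := norm_sub_norm_le (1 : ℂ) w
    rwa [norm_one, norm_mul, hunit, mul_one] at h
  refine ⟨mem_ball_zero_iff.2 (norm_lt_one_of_poissonK_pos (by linarith)), ?_,
    abs_arg_le_of_mul_norm_one_sub_lt ht hclose⟩
  rw [le_div_iff₀ (by linarith)]
  nlinarith

theorem MeasureTheory.lintegral_ofReal_le_measure_univ_mul_add_lintegral_Ioi {α : Type*}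
    [MeasurableSpace α] (μ : Measure α) {f : α → ℝ} (hf : AEMeasurable f μ) {a : ℝ}
    (ha : 0 ≤ a) :
    ∫⁻ x, ENNReal.ofReal (f x) ∂μ ≤
      μ univ * ENNReal.ofReal a + ∫⁻ t in Ioi a, μ {x | t < f x} := by
  have hmax : ∫⁻ x, ENNReal.ofReal (f x) ∂μ = ∫⁻ x, ENNReal.ofReal (max (f x) 0) ∂μ := by
    simp
  rw [hmax, lintegral_eq_lintegral_meas_lt (f := fun x => max (f x) 0) μ
      (ae_of_all _ fun _ => le_max_right _ _) (hf.max aemeasurable_const),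
    ← Ioc_union_Ioi_eq_Ioi ha,
    lintegral_union measurableSet_Ioi (Ioc_disjoint_Ioi le_rfl)]
  refine add_le_add ?_ ?_
  · calc ∫⁻ t in Ioc 0 a, μ {x | t < max (f x) 0} ≤ ∫⁻ _ in Ioc 0 a, μ univ :=
          lintegral_mono fun _ => measure_mono (subset_univ _)
      _ = μ univ * ENNReal.ofReal a := by rw [setLIntegral_const, Real.volume_Ioc, sub_zero]
  · refine setLIntegral_mono' measurableSet_Ioi fun t ht => measure_mono fun x hx => ?_
    have ht0 : ¬t < 0 := (ha.trans_lt ht).not_gt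
    simpa [lt_max_iff, ht0] using hx

theorem lintegral_Ioi_comp_div {c : ℝ} (hc : 0 < c) (F : ℝ → ℝ≥0∞) :
    ∫⁻ t in Ioi c, F (c / t) = ∫⁻ x in Ioo 0 1, ENNReal.ofReal (c / x ^ 2) * F x := by
  have himage : (c / ·) '' Ioo 0 1 = Ioi c := by
    ext y
    constructor
    · rintro ⟨x, ⟨hx0, hx1⟩, rfl⟩
      exact (lt_div_iff₀ hx0).2 (by nlinarith)
    · intro hy
      have hy0 : 0 < y := hc.trans hy
      exact ⟨c / y, ⟨div_pos hc hy0, (div_lt_one hy0).2 hy⟩, div_div_cancel₀ hc.ne'⟩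
  have hderiv : ∀ x ∈ Ioo (0 : ℝ) 1, HasDerivWithinAt (c / ·) (-(c / x ^ 2)) (Ioo 0 1) x :=
    fun x hx => by
      simpa [div_eq_mul_inv] using ((hasDerivAt_inv hx.1.ne').const_mul c).hasDerivWithinAt
  have hinj : InjOn (c / ·) (Ioo (0 : ℝ) 1) := fun x _ y _ h =>
    inv_inj.1 (mul_left_cancel₀ hc.ne' h)
  rw [← himage, lintegral_image_eq_lintegral_abs_deriv_mul measurableSet_Ioo hderiv hinj]
  refine setLIntegral_congr_fun measurableSet_Ioo fun x hx => ?_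
  rw [abs_neg, abs_of_pos (by have := hx.1; positivity), div_div_cancel₀ hc.ne']

theorem bounded_balayage_of_carleson_condition_general (μ : Measure ℂ) [IsFiniteMeasure μ]
    (g : ℝ → ℝ)
    (hint : IntegrableOn (fun x => g x / x ^ 2) (Ioo 0 1) volume)
    (hμg : ∀ θ : ℝ, ∀ r ∈ Ioo (0 : ℝ) 2, μ (carlesonWindow θ r) ≤ ENNReal.ofReal (g r)) :
    ∃ C : ℝ, ∀ θ : ℝ,
      ∫⁻ z, ENNReal.ofReal (poissonK z (Complex.exp (θ * Complex.I))) ∂μ ≤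
        ENNReal.ofReal C := by
  set B := μ univ * ENNReal.ofReal 5 + ∫⁻ x in Ioo 0 1, ENNReal.ofReal (5 * (g x / x ^ 2))
  have hB : B ≠ ∞ :=
    ENNReal.add_ne_top.2 ⟨by finiteness, ((hint.const_mul 5).lintegral_lt_top).ne⟩
  refine ⟨B.toReal, fun θ => ?_⟩
  have hmeas : Measurable fun z => poissonK z (exp (θ * I)) := by unfold poissonK; fun_prop
  have htail : ∀ t ∈ Ioi (5 : ℝ),
      μ {z | t < poissonK z (exp (θ * I))} ≤ ENNReal.ofReal (g (5 / t)) := by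
    intro t (ht : 5 < t)
    have hr : 5 / t ∈ Ioo (0 : ℝ) 2 := ⟨by positivity, by rw [div_lt_iff₀ (by linarith)]; linarith⟩
    exact (measure_mono fun z hz => mem_carlesonWindow_of_lt_poissonK ht.le hz).trans (hμg θ _ hr)
  rw [ENNReal.ofReal_toReal hB]
  calc ∫⁻ z, ENNReal.ofReal (poissonK z (exp (θ * I))) ∂μ
      ≤ μ univ * ENNReal.ofReal 5 + ∫⁻ t in Ioi 5, μ {z | t < poissonK z (exp (θ * I))} :=
        lintegral_ofReal_le_measure_univ_mul_add_lintegral_Ioi μ hmeas.aemeasurable (by norm_num)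
    _ ≤ μ univ * ENNReal.ofReal 5 + ∫⁻ t in Ioi 5, ENNReal.ofReal (g (5 / t)) :=
        add_le_add le_rfl (setLIntegral_mono' measurableSet_Ioi htail)
    _ = B := by
        rw [lintegral_Ioi_comp_div (by norm_num) (fun x => ENNReal.ofReal (g x))]
        congr 1
        refine setLIntegral_congr_fun measurableSet_Ioo fun x hx => ?_
        rw [← ENNReal.ofReal_mul (by positivity)]
        ring_nf

/-- A Carleson-window growth condition `μ(Q(e^{iθ},r)) ≤ g(r)` with `∫₀ g(x)/x² dx < ∞` implies
that `μ` has bounded Poisson balayage. -/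
theorem bounded_balayage_of_carleson_condition (μ : Measure ℂ) [IsFiniteMeasure μ]
    (hsupp : μ unitDiscᶜ = 0) (g : ℝ → ℝ) (hg : MonotoneOn g (Ico 0 2))
    (hint : IntegrableOn (fun x => g x / x ^ 2) (Ioo 0 1) volume)
    (hμg : ∀ θ : ℝ, ∀ r ∈ Ioo (0 : ℝ) 2, μ (carlesonWindow θ r) ≤ ENNReal.ofReal (g r)) :
    ∃ C : ℝ, ∀ θ : ℝ,
      ∫⁻ z, ENNReal.ofReal (poissonK z (Complex.exp (θ * Complex.I))) ∂μ ≤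
        ENNReal.ofReal C :=
  bounded_balayage_of_carleson_condition_general μ g hint hμg
end
end

section
/- Let m : [0,1) → [0,∞) be measurable and μ_m the measure on the radius [0,1) ⊂ D given by dμ_m = m(x)dx. Then μ_m has bounded Poisson balayage if and only if ∫_0^1 m(x)/(1-x) dx < ∞. -/
open MeasureTheory Set
open scoped Real ENNReal

noncomputable section

lemma poissonK_upper (x θ : ℝ) (hx : x ∈ Ico (0:ℝ) 1) :
    poissonK (x : ℂ) (Complex.exp (θ * Complex.I)) ≤ 2 / (1 - x) := by
  obtain ⟨hx0, hx1⟩ := hx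
  have h1x : (0:ℝ) < 1 - x := by linarith
  have hnx : ‖(x:ℂ)‖ = x := by
    rw [Complex.norm_real, Real.norm_of_nonneg hx0]
  have hζ : ‖Complex.exp (θ * Complex.I)‖ = 1 := by
    simpa using Complex.abs_exp_ofReal_mul_I θ
  have hden : 1 - x ≤ ‖Complex.exp (θ * Complex.I) - (x:ℂ)‖ := by
    have := norm_sub_norm_le (Complex.exp (θ * Complex.I)) (x:ℂ)
    rw [hζ, hnx] at this
    exact this
  have hden2 : (1 - x)^2 ≤ ‖Complex.exp (θ * Complex.I) - (x:ℂ)‖^2 :=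
    pow_le_pow_left₀ h1x.le hden 2
  have hstep : poissonK (x : ℂ) (Complex.exp (θ * Complex.I)) ≤ (1 - x^2) / (1 - x)^2 := by
    unfold poissonK
    rw [hnx]
    apply div_le_div_of_nonneg_left (by nlinarith) (by positivity) hden2
  calc poissonK (x : ℂ) (Complex.exp (θ * Complex.I)) ≤ (1 - x^2) / (1 - x)^2 := hstep
    _ = (1 + x) / (1 - x) := by field_simp; ring
    _ ≤ 2 / (1 - x) := by
        gcongr
        linarith

lemma poissonK_lower (x : ℝ) (hx : x ∈ Ico (0:ℝ) 1) :
    1 / (1 - x) ≤ poissonK (x : ℂ) 1 := by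
  obtain ⟨hx0, hx1⟩ := hx
  have h1x : (0:ℝ) < 1 - x := by linarith
  have hnx : ‖(x:ℂ)‖ = x := by
    rw [Complex.norm_real, Real.norm_of_nonneg hx0]
  have hd : ‖(1:ℂ) - (x:ℂ)‖ = 1 - x := by
    rw [show ((1:ℂ) - (x:ℂ)) = ((1 - x : ℝ) : ℂ) by push_cast; ring,
      Complex.norm_real, Real.norm_of_nonneg h1x.le]
  unfold poissonK
  rw [hnx, hd]
  rw [div_le_div_iff₀ h1x (by positivity)]
  nlinarith

/-- The measure `m(x)dx` on the radius `[0,1)` has bounded Poisson balayage iff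
`∫₀¹ m(x)/(1-x) dx < ∞`. -/
theorem radial_measure_bounded_balayage_iff (m : ℝ → ℝ) (hm : Measurable m)
    (hmpos : ∀ x ∈ Ico (0 : ℝ) 1, 0 ≤ m x) :
    (∃ C : ℝ, ∀ θ : ℝ,
      ∫⁻ x in Ico (0 : ℝ) 1,
        ENNReal.ofReal (poissonK (x : ℂ) (Complex.exp (θ * Complex.I)) * m x) ≤
          ENNReal.ofReal C) ↔
    (∫⁻ x in Ico (0 : ℝ) 1, ENNReal.ofReal (m x / (1 - x))) < ⊤ := by
  constructor
  · rintro ⟨C, hC⟩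
    have h0 := hC 0
    have hexp : Complex.exp ((0:ℝ) * Complex.I) = 1 := by simp
    have hmono : (∫⁻ x in Ico (0 : ℝ) 1, ENNReal.ofReal (m x / (1 - x))) ≤
        ∫⁻ x in Ico (0 : ℝ) 1,
          ENNReal.ofReal (poissonK (x : ℂ) (Complex.exp ((0:ℝ) * Complex.I)) * m x) := by
      apply setLIntegral_mono' measurableSet_Ico
      intro x hx
      apply ENNReal.ofReal_le_ofReal
      rw [hexp]
      have h1x : (0:ℝ) < 1 - x := by linarith [hx.2]
      have := poissonK_lower x hx
      have hm0 := hmpos x hx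
      calc m x / (1 - x) = 1 / (1 - x) * m x := by ring
        _ ≤ poissonK (x : ℂ) 1 * m x := mul_le_mul_of_nonneg_right this hm0
    exact lt_of_le_of_lt (hmono.trans h0) ENNReal.ofReal_lt_top
  · intro hI
    set I := ∫⁻ x in Ico (0 : ℝ) 1, ENNReal.ofReal (m x / (1 - x)) with hIdef
    refine ⟨(2 * I).toReal, fun θ => ?_⟩
    have h2I : 2 * I ≠ ⊤ := by
      exact ENNReal.mul_ne_top (by norm_num) hI.ne
    rw [ENNReal.ofReal_toReal h2I]
    have hmono : (∫⁻ x in Ico (0 : ℝ) 1,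
        ENNReal.ofReal (poissonK (x : ℂ) (Complex.exp (θ * Complex.I)) * m x)) ≤
        ∫⁻ x in Ico (0 : ℝ) 1, 2 * ENNReal.ofReal (m x / (1 - x)) := by
      apply setLIntegral_mono' measurableSet_Ico
      intro x hx
      have h1x : (0:ℝ) < 1 - x := by linarith [hx.2]
      have hm0 := hmpos x hx
      have hP := poissonK_upper x θ hx
      have : poissonK (x : ℂ) (Complex.exp (θ * Complex.I)) * m x ≤ 2 * (m x / (1 - x)) := by
        calc poissonK (x : ℂ) (Complex.exp (θ * Complex.I)) * m x
            ≤ 2 / (1 - x) * m x := mul_le_mul_of_nonneg_right hP hm0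
          _ = 2 * (m x / (1 - x)) := by ring
      calc ENNReal.ofReal (poissonK (x : ℂ) (Complex.exp (θ * Complex.I)) * m x)
          ≤ ENNReal.ofReal (2 * (m x / (1 - x))) := ENNReal.ofReal_le_ofReal this
        _ = 2 * ENNReal.ofReal (m x / (1 - x)) := by
            rw [ENNReal.ofReal_mul (by norm_num)]; norm_num
    calc (∫⁻ x in Ico (0 : ℝ) 1,
        ENNReal.ofReal (poissonK (x : ℂ) (Complex.exp (θ * Complex.I)) * m x))
        ≤ ∫⁻ x in Ico (0 : ℝ) 1, 2 * ENNReal.ofReal (m x / (1 - x)) := hmono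
      _ = 2 * I := lintegral_const_mul' 2 _ (by norm_num)
end
end

section
/- Suppose φ : D → [0,∞) is such that φ_{n,k} := sup_{Q_{n,k}} φ satisfies: sup over all families A of pairwise disjoint dyadic arcs {I_{n,k}}_{(n,k)∈A} of Σ_{(n,k)∈A} φ_{n,k} σ(I_{n,k}) is finite. Then φ admits a positive harmonic majorant on D. -/
open MeasureTheory Set
open scoped Real ENNReal

noncomputable section

/-- Angles of the dyadic arc `I_{n,k}`. -/
def arcAngles (n k : ℕ) : Set ℝ :=
  Ico (2 * π * k / 2 ^ n) (2 * π * (k + 1) / 2 ^ n)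

/-- The dyadic Whitney square `Q_{n,k}`. -/
def whitney (n k : ℕ) : Set ℂ :=
  {z : ℂ | ∃ r θ : ℝ, θ ∈ arcAngles n k ∧
    r ∈ Ico (1 - (2 : ℝ) ^ (-(n : ℝ))) (1 - (2 : ℝ) ^ (-(n : ℝ) - 1)) ∧
    z = (r : ℂ) * Complex.exp (θ * Complex.I)}

/-- `sup_{Q_{n,k}} φ`, with values in `[0,∞]`. -/
def supWhitney (φ : ℂ → ℝ) (n k : ℕ) : ℝ≥0∞ :=
  ⨆ z ∈ whitney n k, ENNReal.ofReal (φ z)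

/-!
Let `F x` be the largest total weight `∑ φ_{n,k} σ(I_{n,k})` of a disjoint family of dyadic arcs
`I_{n,k}`, `k < 2^n`, whose angles lie in `[0, x)`. By hypothesis `F` is bounded; it is monotone, and
appending an arc `[a, b)` to a family lying left of `a` gives `F a + φ_{n,k} σ(I_{n,k}) ≤ F b`.
Hence the Stieltjes measure `ν` of `F` is finite and `ν(I_{n,k}) ≥ φ_{n,k} σ(I_{n,k})`.
The Poisson integral `u` of `ν`, transported to the circle, is nonnegative and harmonic, being
the real part of the holomorphic function `ν(𝕋) + 2z ∫ (w - z)⁻¹ dν(w)`. On a Whitney square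
`Q_{n,k}` the Poisson kernel is at least `2^n / 128` along `I_{n,k}`, so for `z ∈ Q_{n,k}`,
`φ z ≤ φ_{n,k} ≤ 2^n ν(I_{n,k}) ≤ 128 u z`.
-/

open Complex InnerProductSpace Filter Topology

theorem InnerProductSpace.HarmonicOnNhd.harmonicOnDisc {f : ℂ → ℝ}
    (hf : HarmonicOnNhd f unitDisc) : HarmonicOnDisc f := by
  refine ⟨hf.contDiffOn, fun z hz => ?_⟩
  have h := (hf z hz).2.self_of_nhds
  rwa [laplacian_eq_iteratedFDeriv_complexPlane] at h

lemma poissonK_nonneg {z : ℂ} (hz : z ∈ unitDisc) (w : ℂ) : 0 ≤ poissonK z w := by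
  have hz1 : ‖z‖ < 1 := mem_ball_zero_iff.mp hz
  exact div_nonneg (by nlinarith [norm_nonneg z]) (sq_nonneg _)

lemma sub_ne_zero_of_mem_unitCircle {z w : ℂ} (hz : z ∈ unitDisc) (hw : w ∈ unitCircle) :
    w - z ≠ 0 := by
  rw [sub_ne_zero]
  rintro rfl
  exact (mem_sphere_zero_iff_norm.mp hw).not_lt (mem_ball_zero_iff.mp hz)

lemma poissonK_eq_re {z w : ℂ} (hz : z ∈ unitDisc) (hw : w ∈ unitCircle) :
    poissonK z w = (1 + 2 * z * (w - z)⁻¹).re := by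
  have hwz := sub_ne_zero_of_mem_unitCircle hz hw
  have herglotz : 1 + 2 * z * (w - z)⁻¹ = herglotzRieszKernel 0 z w := by
    rw [herglotzRieszKernel, sub_zero, sub_zero]
    field_simp
    ring
  rw [herglotz, ← Function.comp_apply (f := re), ← poissonKernel_eq_re_herglotzRieszKernel,
    poissonKernel, poissonK, sub_zero, sub_zero, mem_sphere_zero_iff_norm.mp hw, one_pow]

lemma resolvent_eq_inv_sub (z : ℂ) : resolvent z = fun w : ℂ => (w - z)⁻¹ := by
  ext w
  simp [resolvent]

def poissonIntegral (μ : Measure ℂ) (z : ℂ) : ℝ := ∫ w, poissonK z w ∂μ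

section PoissonIntegral

variable {μ : Measure ℂ} {z : ℂ}

lemma notMem_support_of_mem_unitDisc (hμ : ∀ᵐ w ∂μ, w ∈ unitCircle) (hz : z ∈ unitDisc) :
    z ∉ μ.support := fun hz' =>
  (mem_sphere_zero_iff_norm.mp (Measure.support_subset_of_isClosed Metric.isClosed_sphere hμ hz')
    ).not_lt (mem_ball_zero_iff.mp hz)

variable [IsFiniteMeasure μ]

lemma integrable_inv_sub (hμ : ∀ᵐ w ∂μ, w ∈ unitCircle) (hz : z ∈ unitDisc) :
    Integrable (fun w => (w - z)⁻¹) μ := by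
  rw [← resolvent_eq_inv_sub]
  exact integrable_resolvent (by simpa using notMem_support_of_mem_unitDisc hμ hz)

lemma integrable_one_add_mul_inv_sub (hμ : ∀ᵐ w ∂μ, w ∈ unitCircle) (hz : z ∈ unitDisc) :
    Integrable (fun w => 1 + 2 * z * (w - z)⁻¹) μ :=
  (integrable_const 1).add ((integrable_inv_sub hμ hz).const_mul _)

lemma integrable_poissonK (hμ : ∀ᵐ w ∂μ, w ∈ unitCircle) (hz : z ∈ unitDisc) :
    Integrable (poissonK z) μ :=
  (integrable_one_add_mul_inv_sub hμ hz).re.congr <|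
    hμ.mono fun _ hw => (poissonK_eq_re hz hw).symm

theorem poissonIntegral_eq_re (hμ : ∀ᵐ w ∂μ, w ∈ unitCircle) (hz : z ∈ unitDisc) :
    poissonIntegral μ z = ((μ.real Set.univ : ℂ) + 2 * z * resolventTransform μ z).re := by
  calc poissonIntegral μ z = ∫ w, (1 + 2 * z * (w - z)⁻¹).re ∂μ :=
        integral_congr_ae <| hμ.mono fun _ hw => poissonK_eq_re hz hw
    _ = (∫ w, (1 + 2 * z * (w - z)⁻¹) ∂μ).re :=
        integral_re (integrable_one_add_mul_inv_sub hμ hz)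
    _ = _ := by
      rw [integral_add (integrable_const 1) ((integrable_inv_sub hμ hz).const_mul _),
        integral_const_mul, integral_const, resolventTransform, resolvent_eq_inv_sub]
      simp

theorem harmonicOnNhd_poissonIntegral (hμ : ∀ᵐ w ∂μ, w ∈ unitCircle) :
    HarmonicOnNhd (poissonIntegral μ) unitDisc := by
  intro z hz
  have hU : (algebraMap ℂ ℂ '' μ.support)ᶜ ∈ 𝓝 z := by
    simpa using Measure.isOpen_compl_support.mem_nhds (notMem_support_of_mem_unitDisc hμ hz)
  have hG : AnalyticAt ℂ (fun z : ℂ => (μ.real Set.univ : ℂ) + 2 * z * resolventTransform μ z) z :=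
    analyticAt_const.add ((analyticAt_const.mul analyticAt_id).mul
      (analyticOn_resolventTransform.analyticAt hU))
  refine (harmonicAt_congr_nhds ?_).2 hG.harmonicAt_re
  filter_upwards [Metric.isOpen_ball.mem_nhds hz] with w hw using poissonIntegral_eq_re hμ hw

end PoissonIntegral

section DisjointIntervals

variable {ι : Type*} (s : Set ι) (a b : ι → ℝ) (w : ι → ℝ≥0∞)

def leftFamilies (x : ℝ) : Set (Finset ι) :=
  {A | (∀ i ∈ A, i ∈ s ∧ b i ≤ x) ∧ (A : Set ι).PairwiseDisjoint fun i => Ico (a i) (b i)}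

def leftMass (x : ℝ) : ℝ≥0∞ :=
  ⨆ A : leftFamilies s a b x, ∑ i ∈ A.1, w i

variable {s a b w}

lemma leftMass_mono : Monotone (leftMass s a b w) := fun _ _ hxy =>
  iSup_le fun A => le_iSup_of_le
    ⟨A.1, fun i hi => ⟨(A.2.1 i hi).1, (A.2.1 i hi).2.trans hxy⟩, A.2.2⟩ le_rfl

lemma leftMass_le {C : ℝ≥0∞} (hsum : ∀ A : Finset ι, (∀ i ∈ A, i ∈ s) →
    (A : Set ι).PairwiseDisjoint (fun i => Ico (a i) (b i)) → ∑ i ∈ A, w i ≤ C) (x : ℝ) :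
    leftMass s a b w x ≤ C :=
  iSup_le fun A => hsum A.1 (fun i hi => (A.2.1 i hi).1) A.2.2

lemma leftMass_add_le {i : ι} (hi : i ∈ s) (hab : a i < b i) :
    leftMass s a b w (a i) + w i ≤ leftMass s a b w (b i) := by
  classical
  have : Nonempty (leftFamilies s a b (a i)) := ⟨⟨∅, by simp [leftFamilies]⟩⟩
  rw [leftMass, ENNReal.iSup_add]
  refine iSup_le fun ⟨A, hA⟩ => ?_
  have hiA : i ∉ A := fun h => lt_irrefl _ ((hA.1 i h).2.trans_lt hab)
  have hins : insert i A ∈ leftFamilies s a b (b i) := by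
    refine ⟨?_, ?_⟩
    · simp only [Finset.mem_insert, forall_eq_or_imp]
      exact ⟨⟨hi, le_rfl⟩, fun j hj => ⟨(hA.1 j hj).1, (hA.1 j hj).2.trans hab.le⟩⟩
    · rw [Finset.coe_insert]
      refine hA.2.insert fun j hj _ => Disjoint.symm <| Set.disjoint_left.2 fun t htj hti => ?_
      exact absurd hti.1 (not_le.2 (htj.2.trans_le (hA.1 j hj).2))
  calc ∑ j ∈ A, w j + w i = ∑ j ∈ insert i A, w j := by rw [Finset.sum_insert hiA, add_comm]
    _ ≤ leftMass s a b w (b i) :=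
        le_iSup_of_le (⟨insert i A, hins⟩ : leftFamilies s a b (b i)) le_rfl

theorem exists_isFiniteMeasure_le_measure_Icc {C : ℝ≥0∞} (hC : C ≠ ∞)
    (hab : ∀ i ∈ s, a i < b i)
    (hsum : ∀ A : Finset ι, (∀ i ∈ A, i ∈ s) →
      (A : Set ι).PairwiseDisjoint (fun i => Ico (a i) (b i)) → ∑ i ∈ A, w i ≤ C) :
    ∃ ν : Measure ℝ, IsFiniteMeasure ν ∧ ∀ i ∈ s, w i ≤ ν (Icc (a i) (b i)) := by
  set F : ℝ → ℝ := fun x => (leftMass s a b w x).toReal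
  have hfin : ∀ x, leftMass s a b w x ≠ ∞ := fun x => ne_top_of_le_ne_top hC (leftMass_le hsum x)
  have hF : Monotone F := fun x y hxy => ENNReal.toReal_mono (hfin y) (leftMass_mono hxy)
  set f := hF.stieltjesFunction
  have hf : (f : ℝ → ℝ) = Function.rightLim F := funext hF.stieltjesFunction_eq
  refine ⟨f.measure, f.isFiniteMeasure_of_forall_abs_le (C := C.toReal) fun x => ?_,
    fun i hi => ?_⟩
  · have hF0 : 0 ≤ F x := ENNReal.toReal_nonneg
    have hC0 : 0 ≤ C.toReal := ENNReal.toReal_nonneg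
    rw [hf, abs_le]
    exact ⟨by linarith [hF.le_rightLim (le_refl x)],
      (hF.rightLim_le (lt_add_one x)).trans (ENNReal.toReal_mono hC (leftMass_le hsum _))⟩
  · have hleft : Function.leftLim f (a i) ≤ F (a i) := by
      rw [hf, leftLim_rightLim (hF.tendsto_leftLim _)]
      exact hF.leftLim_le le_rfl
    have hright : F (b i) ≤ f (b i) := hf ▸ hF.le_rightLim le_rfl
    have hwi : w i ≠ ∞ :=
      ne_top_of_le_ne_top (hfin (b i)) (le_add_self.trans (leftMass_add_le hi (hab i hi)))
    have hjump : F (a i) + (w i).toReal ≤ F (b i) := by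
      rw [← ENNReal.toReal_add (hfin _) hwi]
      exact ENNReal.toReal_mono (hfin _) (leftMass_add_le hi (hab i hi))
    rw [f.measure_Icc, ← ENNReal.ofReal_toReal hwi]
    exact ENNReal.ofReal_le_ofReal (by linarith)

end DisjointIntervals

lemma two_rpow_neg_natCast (n : ℕ) : (2 : ℝ) ^ (-(n : ℝ)) = ((2 : ℝ) ^ n)⁻¹ := by
  rw [Real.rpow_neg zero_le_two, Real.rpow_natCast]

lemma mem_whitney {n k : ℕ} {z : ℂ} : z ∈ whitney n k ↔ ∃ r θ : ℝ, θ ∈ arcAngles n k ∧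
    1 - ((2 : ℝ) ^ n)⁻¹ ≤ r ∧ r < 1 - ((2 : ℝ) ^ (n + 1))⁻¹ ∧ z = r * exp (θ * I) := by
  have h : (2 : ℝ) ^ (-(n : ℝ) - 1) = ((2 : ℝ) ^ (n + 1))⁻¹ := by
    rw [show -(n : ℝ) - 1 = -((n + 1 : ℕ) : ℝ) by push_cast; ring, two_rpow_neg_natCast]
  simp [whitney, h, and_assoc]

lemma norm_ofReal_mul_exp {r : ℝ} (hr : 0 ≤ r) (θ : ℝ) : ‖(r : ℂ) * exp (θ * I)‖ = r := by
  rw [norm_mul, norm_exp_ofReal_mul_I, mul_one, norm_real, Real.norm_of_nonneg hr]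

lemma norm_exp_mul_I_sub_exp_mul_I_le (s t : ℝ) : ‖exp (s * I) - exp (t * I)‖ ≤ |s - t| := by
  have h : exp (s * I) - exp (t * I) = exp (t * I) * (exp (I * (s - t : ℝ)) - 1) := by
    rw [mul_sub, ← exp_add]; push_cast; ring_nf
  rw [h, norm_mul, norm_exp_ofReal_mul_I, one_mul]
  exact Real.norm_exp_I_mul_ofReal_sub_one_le

lemma exists_mem_Ico_eq_norm_mul_exp (z : ℂ) : ∃ θ ∈ Ico 0 (2 * π), z = ‖z‖ * exp (θ * I) := by
  refine ⟨toIcoMod Real.two_pi_pos 0 (arg z),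
    by simpa using toIcoMod_mem_Ico Real.two_pi_pos 0 (arg z), ?_⟩
  rw [← self_sub_toIcoDiv_zsmul, ← Circle.coe_exp, Circle.periodic_exp.sub_zsmul_eq,
    Circle.coe_exp, norm_mul_exp_arg_mul_I]

lemma exists_lt_two_pow_mem_arcAngles (n : ℕ) {θ : ℝ} (hθ : θ ∈ Ico 0 (2 * π)) :
    ∃ k < 2 ^ n, θ ∈ arcAngles n k := by
  have hL : 0 < 2 * π / 2 ^ n := by positivity
  set k := ⌊θ / (2 * π / 2 ^ n)⌋₊
  have hk : (k : ℝ) * (2 * π / 2 ^ n) ≤ θ :=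
    (le_div_iff₀ hL).1 (Nat.floor_le (div_nonneg hθ.1 hL.le))
  have hk' : θ < (k + 1) * (2 * π / 2 ^ n) := (div_lt_iff₀ hL).1 (Nat.lt_floor_add_one _)
  refine ⟨k, ?_, ?_, ?_⟩
  · rw [Nat.floor_lt (div_nonneg hθ.1 hL.le), div_lt_iff₀ hL]
    push_cast
    field_simp
    exact hθ.2
  · calc 2 * π * k / 2 ^ n = k * (2 * π / 2 ^ n) := by ring
      _ ≤ θ := hk
  · calc θ < (k + 1) * (2 * π / 2 ^ n) := hk'
      _ = 2 * π * (k + 1) / 2 ^ n := by ring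

lemma exists_mem_dyadic_shell {r : ℝ} (hr0 : 0 ≤ r) (hr : r < 1) :
    ∃ n : ℕ, 1 - ((2 : ℝ) ^ n)⁻¹ ≤ r ∧ r < 1 - ((2 : ℝ) ^ (n + 1))⁻¹ := by
  obtain ⟨n, h1, h2⟩ :=
    exists_nat_pow_near ((one_le_inv₀ (sub_pos.2 hr)).2 (by linarith)) one_lt_two
  rw [le_inv_comm₀ (by positivity) (sub_pos.2 hr)] at h1
  rw [inv_lt_comm₀ (sub_pos.2 hr) (by positivity)] at h2
  exact ⟨n, by linarith, by linarith⟩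

theorem exists_mem_whitney {z : ℂ} (hz : z ∈ unitDisc) : ∃ n k, k < 2 ^ n ∧ z ∈ whitney n k := by
  obtain ⟨θ, hθ, hzθ⟩ := exists_mem_Ico_eq_norm_mul_exp z
  obtain ⟨n, hn⟩ := exists_mem_dyadic_shell (norm_nonneg z) (mem_ball_zero_iff.mp hz)
  obtain ⟨k, hk, hθk⟩ := exists_lt_two_pow_mem_arcAngles n hθ
  exact ⟨n, k, hk, mem_whitney.2 ⟨‖z‖, θ, hθk, hn.1, hn.2, hzθ⟩⟩

lemma whitney_subset_unitDisc (n k : ℕ) : whitney n k ⊆ unitDisc := by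
  intro z hz
  obtain ⟨r, θ, -, hr1, hr2, rfl⟩ := mem_whitney.1 hz
  have hδ : ((2 : ℝ) ^ n)⁻¹ ≤ 1 := inv_le_one_of_one_le₀ (one_le_pow₀ one_le_two)
  rw [unitDisc, mem_ball_zero_iff, norm_ofReal_mul_exp (by linarith)]
  linarith [inv_pos.2 (pow_pos (two_pos : (0 : ℝ) < 2) (n + 1))]

theorem le_poissonK_of_mem_whitney {n k : ℕ} {z : ℂ} (hz : z ∈ whitney n k) {t : ℝ}
    (ht : t ∈ Icc (2 * π * k / 2 ^ n) (2 * π * (k + 1) / 2 ^ n)) :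
    (2 : ℝ) ^ n / 128 ≤ poissonK z (exp (t * I)) := by
  obtain ⟨r, θ, hθ, hr1, hr2, rfl⟩ := mem_whitney.1 hz
  set δ : ℝ := ((2 : ℝ) ^ n)⁻¹
  have hδ : 0 < δ := by positivity
  have hδ1 : δ ≤ 1 := inv_le_one_of_one_le₀ (one_le_pow₀ one_le_two)
  have hr2' : r < 1 - δ / 2 := by rwa [pow_succ, mul_inv, ← div_eq_mul_inv] at hr2
  have hnorm := norm_ofReal_mul_exp (show 0 ≤ r by linarith) θ
  -- `1 - |z|² ≥ δ / 2` while `|e^{it} - z| ≤ |t - θ| + (1 - r) ≤ 2πδ + δ ≤ 8δ`.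
  have hnum : δ / 2 ≤ 1 - ‖(r : ℂ) * exp (θ * I)‖ ^ 2 := by
    rw [hnorm]; nlinarith
  have hradial : ‖exp (θ * I) - r * exp (θ * I)‖ = 1 - r := by
    rw [show exp (θ * I) - r * exp (θ * I) = ((1 - r : ℝ) : ℂ) * exp (θ * I) by push_cast; ring,
      norm_ofReal_mul_exp (by linarith)]
  have hangular : |t - θ| ≤ 2 * π * δ := by
    have : 2 * π * (k + 1) / 2 ^ n - 2 * π * k / 2 ^ n = 2 * π * δ := by
      simp only [δ]; field_simp; ring
    rw [abs_le]; constructor <;> linarith [ht.1, ht.2, hθ.1, hθ.2]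
  have hden : ‖exp (t * I) - r * exp (θ * I)‖ ≤ 8 * δ :=
    calc ‖exp (t * I) - r * exp (θ * I)‖
        ≤ ‖exp (t * I) - exp (θ * I)‖ + ‖exp (θ * I) - r * exp (θ * I)‖ :=
          norm_sub_le_norm_sub_add_norm_sub _ _ _
      _ ≤ 2 * π * δ + δ := add_le_add ((norm_exp_mul_I_sub_exp_mul_I_le t θ).trans hangular)
          (by rw [hradial]; linarith)
      _ ≤ 8 * δ := by nlinarith [Real.pi_lt_d2]
  have hden0 : 0 < ‖exp (t * I) - r * exp (θ * I)‖ := by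
    have := norm_sub_norm_le (exp (t * I)) (r * exp (θ * I))
    rw [norm_exp_ofReal_mul_I, hnorm] at this
    linarith
  calc (2 : ℝ) ^ n / 128 = (δ / 2) / (8 * δ) ^ 2 := by simp only [δ]; field_simp; ring
    _ ≤ poissonK (r * exp (θ * I)) (exp (t * I)) :=
      div_le_div₀ (by linarith) hnum (by positivity) (pow_le_pow_left₀ hden0.le hden 2)

lemma measurable_poissonK (z : ℂ) : Measurable (poissonK z) := by
  unfold poissonK; fun_prop

section MapExp

variable (ν : Measure ℝ)

lemma ae_map_exp_mem_unitCircle : ∀ᵐ w ∂ν.map (fun t : ℝ => exp (t * I)), w ∈ unitCircle :=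
  (ae_map_iff (by fun_prop) Metric.isClosed_sphere.measurableSet).2
    (ae_of_all _ fun t => by simp)

lemma poissonIntegral_map_exp (z : ℂ) :
    poissonIntegral (ν.map fun t : ℝ => exp (t * I)) z = ∫ t, poissonK z (exp (t * I)) ∂ν :=
  integral_map (by fun_prop) (measurable_poissonK z).aestronglyMeasurable

theorem le_poissonIntegral_map_exp [IsFiniteMeasure ν] {n k : ℕ} {z : ℂ}
    (hz : z ∈ whitney n k) :
    (2 : ℝ) ^ n / 128 * ν.real (Icc (2 * π * k / 2 ^ n) (2 * π * (k + 1) / 2 ^ n)) ≤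
      poissonIntegral (ν.map fun t : ℝ => exp (t * I)) z := by
  have hz' := whitney_subset_unitDisc n k hz
  have hInt : Integrable (fun t : ℝ => poissonK z (exp (t * I))) ν :=
    (integrable_map_measure (measurable_poissonK z).aestronglyMeasurable (by fun_prop)).1
      (integrable_poissonK (ae_map_exp_mem_unitCircle ν) hz')
  rw [poissonIntegral_map_exp, mul_comm, ← smul_eq_mul]
  calc _ ≤ ∫ t in Icc (2 * π * k / 2 ^ n) (2 * π * (k + 1) / 2 ^ n), poissonK z (exp (t * I)) ∂ν :=
        setIntegral_ge_of_const_le measurableSet_Icc (measure_ne_top _ _)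
          (fun t ht => le_poissonK_of_mem_whitney hz ht) hInt.integrableOn
    _ ≤ ∫ t, poissonK z (exp (t * I)) ∂ν :=
        setIntegral_le_integral hInt (ae_of_all _ fun t => poissonK_nonneg hz' _)

end MapExp

lemma le_two_pow_mul_of_supWhitney_mul_le {φ : ℂ → ℝ} {n k : ℕ} {z : ℂ} {b : ℝ≥0∞}
    (hb : b ≠ ∞) (h : supWhitney φ n k * ENNReal.ofReal (2 ^ (-(n : ℝ))) ≤ b)
    (hz : z ∈ whitney n k) :
    φ z ≤ 2 ^ n * b.toReal := by
  have hδ : ENNReal.ofReal (2 ^ (-(n : ℝ))) = (2 ^ n)⁻¹ := by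
    rw [two_rpow_neg_natCast, ENNReal.ofReal_inv_of_pos (by positivity),
      ENNReal.ofReal_pow zero_le_two, ENNReal.ofReal_ofNat]
  rw [hδ, ← div_eq_mul_inv, ENNReal.div_le_iff (by positivity) (by simp)] at h
  have hφ : ENNReal.ofReal (φ z) ≤ b * 2 ^ n :=
    (le_iSup₂ (f := fun w _ => ENNReal.ofReal (φ w)) z hz).trans (by rwa [supWhitney] at h)
  rw [ENNReal.ofReal_le_iff_le_toReal (ENNReal.mul_ne_top hb (by simp)),
    ENNReal.toReal_mul] at hφ
  simpa [mul_comm] using hφ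

theorem harmonic_majorant_of_disjoint_sum_condition_general (φ : ℂ → ℝ)
    (hcond : ∃ C : ℝ, ∀ A : Finset (ℕ × ℕ), (∀ p ∈ A, p.2 < 2 ^ p.1) →
      ((A : Set (ℕ × ℕ)).Pairwise fun p q =>
        Disjoint (arcAngles p.1 p.2) (arcAngles q.1 q.2)) →
      ∑ p ∈ A, supWhitney φ p.1 p.2 * ENNReal.ofReal ((2 : ℝ) ^ (-(p.1 : ℝ))) ≤
        ENNReal.ofReal C) :
    ∃ h : ℂ → ℝ, HarmonicOnDisc h ∧ (∀ z ∈ unitDisc, 0 ≤ h z) ∧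
      ∀ z ∈ unitDisc, φ z ≤ h z := by
  obtain ⟨C, hC⟩ := hcond
  obtain ⟨ν, hν, hνφ⟩ := exists_isFiniteMeasure_le_measure_Icc
    (s := {p : ℕ × ℕ | p.2 < 2 ^ p.1})
    (a := fun p => 2 * π * p.2 / 2 ^ p.1) (b := fun p => 2 * π * (p.2 + 1) / 2 ^ p.1)
    ENNReal.ofReal_ne_top (fun p _ => by gcongr; exact lt_add_one _) hC
  set μ := ν.map fun t : ℝ => exp (t * I)
  refine ⟨fun z => 128 * poissonIntegral μ z,
    ((harmonicOnNhd_poissonIntegral (ae_map_exp_mem_unitCircle ν)).const_smul).harmonicOnDisc,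
    fun z hz => mul_nonneg (by norm_num) (integral_nonneg (poissonK_nonneg hz)), fun z hz => ?_⟩
  obtain ⟨n, k, hk, hzQ⟩ := exists_mem_whitney hz
  have hφ := le_two_pow_mul_of_supWhitney_mul_le (measure_ne_top ν _) (hνφ (n, k) hk) hzQ
  have hP := le_poissonIntegral_map_exp ν hzQ
  rw [measureReal_def] at hP
  linarith

/-- If the suprema `φ_{n,k} = sup_{Q_{n,k}} φ` satisfy the disjoint-arc summation condition,
then `φ` admits a positive harmonic majorant on the disc. -/
theorem harmonic_majorant_of_disjoint_sum_condition (φ : ℂ → ℝ)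
    (hpos : ∀ z ∈ unitDisc, 0 ≤ φ z)
    (hcond : ∃ C : ℝ, ∀ A : Finset (ℕ × ℕ), (∀ p ∈ A, p.2 < 2 ^ p.1) →
      ((A : Set (ℕ × ℕ)).Pairwise fun p q =>
        Disjoint (arcAngles p.1 p.2) (arcAngles q.1 q.2)) →
      ∑ p ∈ A, supWhitney φ p.1 p.2 * ENNReal.ofReal ((2 : ℝ) ^ (-(p.1 : ℝ))) ≤
        ENNReal.ofReal C) :
    ∃ h : ℂ → ℝ, HarmonicOnDisc h ∧ (∀ z ∈ unitDisc, 0 ≤ h z) ∧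
      ∀ z ∈ unitDisc, φ z ≤ h z :=
  harmonic_majorant_of_disjoint_sum_condition_general φ hcond
end
end
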